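/- Let p, q be coprime positive integers (or p = 0, q = 1), set λ₁/λ₂ = −p/q, u := x^q y^p, and X := X₀ + R·y^ε W₀ a formal vector field where W₀ = λ₁x∂x + λ₂y∂y, X₀ = u^k x∂x + (1+μu^k)W₀, ε ∈ {−1,0,1}. For G ∈ ℂ[[x,y]] there exists F ∈ ℂ[[x,y]] with X·F + ελ₂(1+μu^k)F = G if and only if G contains no monomial of the form y^{−ε}uⁿ for 0 ≤ n ≤ k (equivalently, the coefficients g_{a,b} vanish for (a, b+ε) = l(q,p) with 0 ≤ l ≤ k). If ε ≤ 0 the coefficient of y^{−ε} in F is free and F is unique up to this choice. -/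

import Mathlib

/- Statement 19 (Lemma res-sad-eq-h-form): p, q coprime positive integers (or p = 0,
q = 1), λ₁/λ₂ = −p/q, u := x^q y^p, W₀ = λ₁x∂x + λ₂y∂y, X₀ = u^k x∂x + (1+μu^k)W₀,
X = X₀ + R·y^ε W₀ with ε ∈ {−1,0,1} (R divisible by u^{k+1}; when ε = −1 one is in the
saddle-node case p = 0, λ₁ = 0, so that y^{−1}W₀ = λ₂∂y).  For G ∈ ℂ[[x,y]] there is an
F ∈ ℂ[[x,y]] with X·F + ελ₂(1+μu^k)F = G iff G contains no monomial y^{−ε}uⁿ with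
0 ≤ n ≤ k (i.e. g_{a,b} = 0 whenever (a, b+ε) = l(q,p) with 0 ≤ l ≤ k).  If ε ≤ 0 the
coefficient of y^{−ε} in F is free and F is unique up to this choice. -/

noncomputable section
open MvPowerSeries

abbrev R2 := MvPowerSeries (Fin 2) ℂ

def pd (i : Fin 2) (f : R2) : R2 :=
  fun d => ((d i : ℂ) + 1) * MvPowerSeries.coeff (R := ℂ) (d + Finsupp.single i 1) f

/-- the resonant monomial u = x^q y^p -/
def uMon (p q : ℕ) : R2 := MvPowerSeries.X 0 ^ q * MvPowerSeries.X 1 ^ p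

/-- W₀·f for W₀ = λ₁x∂x + λ₂y∂y -/
def W0D (lam₁ lam₂ : ℂ) (f : R2) : R2 :=
  MvPowerSeries.C (σ := Fin 2) (R := ℂ) lam₁ * MvPowerSeries.X 0 * pd 0 f +
    MvPowerSeries.C (σ := Fin 2) (R := ℂ) lam₂ * MvPowerSeries.X 1 * pd 1 f

/-- X₀·f for X₀ = u^k x∂x + (1+μu^k)W₀ -/
def X0D (lam₁ lam₂ μ : ℂ) (p q k : ℕ) (f : R2) : R2 :=
  uMon p q ^ k * MvPowerSeries.X 0 * pd 0 f +
    (1 + MvPowerSeries.C (σ := Fin 2) (R := ℂ) μ * uMon p q ^ k) * W0D lam₁ lam₂ f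

/-- (y^ε W₀)·f for ε ∈ {−1,0,1}; in the case ε = −1 (where p = 0, λ₁ = 0) one has
y^{−1}W₀ = λ₂∂y. -/
def YepsD (lam₁ lam₂ : ℂ) (ε : ℤ) (f : R2) : R2 :=
  if ε = -1 then MvPowerSeries.C (σ := Fin 2) (R := ℂ) lam₂ * pd 1 f
  else MvPowerSeries.C (σ := Fin 2) (R := ℂ) lam₁ * MvPowerSeries.X 0 *
        MvPowerSeries.X 1 ^ ε.toNat * pd 0 f +
      MvPowerSeries.C (σ := Fin 2) (R := ℂ) lam₂ * MvPowerSeries.X 1 ^ (ε.toNat + 1) * pd 1 f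

/- Comparing coefficients of `x^a y^b`, the equation reads
  `w(a,b) f_{a,b} + (a - kq + μ w(a-kq, b-kp)) f_{a-kq,b-kp} + (R-term) = g_{a,b}`
with `w(a,b) = λ₁a + λ₂(b+ε)`, where the `R`-term only involves coefficients of `F` of `x`-degree
at most `a - (k+1)q`. As `λ₁/λ₂ = -p/q` with `p, q` coprime, `w` vanishes exactly at the exponents
of `y^{-ε}uˡ`, and there `w` is invariant under the shift by `u^k`. So, ordered by `x`-degree, the
system is triangular: a nonresonant equation determines `f_{a,b}`; the equation at `y^{-ε}uˡ` with
`l > k` determines the coefficient of `y^{-ε}u^{l-k}` (it enters with the factor `(l-k)q ≠ 0`);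
for `l ≤ k` the left-hand side vanishes identically, which gives the obstructions; and the
coefficient of `y^{-ε}` is never determined. -/

theorem existsUnique_fixedPoint_of_dependsOn_lt {σ α : Type*} [Nonempty α] (deg : σ → ℕ)
    (Φ : (σ → α) → σ → α)
    (hΦ : ∀ f g e, (∀ e', deg e' < deg e → f e' = g e') → Φ f e = Φ g e) :
    ∃! f, Φ f = f := by
  obtain ⟨x⟩ := ‹Nonempty α›
  let it (n : ℕ) : σ → α := Φ^[n] fun _ => x
  have it_succ (n : ℕ) : it (n + 1) = Φ (it n) := Function.iterate_succ_apply' _ _ _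
  have step (n : ℕ) : ∀ e, deg e < n → it (n + 1) e = it n e := by
    induction n with
    | zero => intro e he; omega
    | succ n ih =>
      intro e he
      have h := hΦ (it (n + 1)) (it n) e fun e' he' => ih e' (by omega)
      rwa [← it_succ, ← it_succ] at h
  have stable (n m : ℕ) (e : σ) (he : deg e < n) : it (n + m) e = it n e := by
    induction m with
    | zero => rfl
    | succ m ih => rw [← add_assoc, step _ e (by omega), ih]
  have fixed : Φ (fun e => it (deg e + 1) e) = fun e => it (deg e + 1) e := by
    funext e
    rw [it_succ]
    refine hΦ _ _ e fun e' he' => ?_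
    obtain ⟨m, hm⟩ := Nat.exists_eq_add_of_lt he'
    show it (deg e' + 1) e' = it (deg e) e'
    rw [hm, add_right_comm, stable _ _ _ (Nat.lt_succ_self _)]
  have agree (f g : σ → α) (hf : Φ f = f) (hg : Φ g = g) (n : ℕ) :
      ∀ e, deg e = n → f e = g e := by
    induction n using Nat.strong_induction_on with
    | _ n ih =>
      intro e he
      rw [← hf, ← hg]
      exact hΦ _ _ e fun e' he' => ih _ (he ▸ he') e' rfl
  exact ⟨_, fixed, fun g hg => funext fun e => agree _ _ hg fixed _ e rfl⟩

theorem Nat.Coprime.exists_of_mul_eq_mul {p q : ℕ} (hq : 0 < q) (hco : Nat.Coprime p q)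
    (x : ℕ) (y : ℤ) : (q : ℤ) * y = p * x ↔ ∃ l : ℕ, (x : ℤ) = l * q ∧ y = l * p := by
  constructor
  · intro h
    obtain ⟨l, rfl⟩ : q ∣ x := hco.symm.dvd_of_dvd_mul_left <| Int.natCast_dvd_natCast.mp
      (by exact_mod_cast Dvd.intro y h)
    refine ⟨l, by push_cast; ring, mul_left_cancel₀ (by exact_mod_cast hq.ne' : (q : ℤ) ≠ 0) ?_⟩
    rw [h]; push_cast; ring
  · rintro ⟨l, hx, rfl⟩
    rw [hx]; ring

namespace ResonantNormalForm

variable {p q k : ℕ} {lam₁ lam₂ μ : ℂ} {ε : ℤ} {R : R2}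

lemma coeff_pd (i : Fin 2) (f : R2) (d : Fin 2 →₀ ℕ) :
    coeff d (pd i f) = (d i + 1) * coeff (d + Finsupp.single i 1) f := rfl

lemma pd_zero (i : Fin 2) : pd i 0 = 0 := by
  ext d; simp [coeff_pd]

lemma coeff_X_mul_pd (i : Fin 2) (f : R2) (d : Fin 2 →₀ ℕ) :
    coeff d (X i * pd i f) = d i * coeff d f := by
  rw [X_def, coeff_monomial_mul]
  split_ifs with h
  · rw [one_mul, coeff_pd, tsub_add_cancel_of_le h, Finsupp.tsub_apply, Finsupp.single_eq_same,
      Nat.cast_sub (Finsupp.single_le_iff.mp h), Nat.cast_one, sub_add_cancel]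
  · rw [Finsupp.single_le_iff, not_le, Nat.lt_one_iff] at h
    simp [h]

lemma coeff_W0D (lam₁ lam₂ : ℂ) (f : R2) (d : Fin 2 →₀ ℕ) :
    coeff d (W0D lam₁ lam₂ f) = (lam₁ * d 0 + lam₂ * d 1) * coeff d f := by
  simp only [W0D, map_add, mul_assoc, coeff_C_mul, coeff_X_mul_pd]
  ring

def uExp (p q n : ℕ) : Fin 2 →₀ ℕ := Finsupp.single 0 (n * q) + Finsupp.single 1 (n * p)

@[simp] lemma uExp_apply_zero (p q n : ℕ) : uExp p q n 0 = n * q := by simp [uExp]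
@[simp] lemma uExp_apply_one (p q n : ℕ) : uExp p q n 1 = n * p := by simp [uExp]

lemma uMon_pow (p q n : ℕ) : uMon p q ^ n = monomial (uExp p q n) 1 := by
  rw [uMon, mul_pow, ← pow_mul, ← pow_mul, X_pow_eq, X_pow_eq, monomial_mul_monomial, one_mul,
    mul_comm q, mul_comm p, uExp]

def homOp (p q k : ℕ) (lam₁ lam₂ μ : ℂ) (ε : ℤ) (R F : R2) : R2 :=
  X0D lam₁ lam₂ μ p q k F + R * YepsD lam₁ lam₂ ε F +
    C ((ε : ℂ) * lam₂) * ((1 + C μ * uMon p q ^ k) * F)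

def weight (lam₁ lam₂ : ℂ) (ε : ℤ) (d : Fin 2 →₀ ℕ) : ℂ := lam₁ * d 0 + lam₂ * d 1 + ε * lam₂

lemma coeff_homOp (F : R2) (d : Fin 2 →₀ ℕ) :
    coeff d (homOp p q k lam₁ lam₂ μ ε R F) =
      weight lam₁ lam₂ ε d * coeff d F +
        (if uExp p q k ≤ d then
          ((d - uExp p q k) 0 + μ * weight lam₁ lam₂ ε (d - uExp p q k)) *
            coeff (d - uExp p q k) F
        else 0) +
        coeff d (R * YepsD lam₁ lam₂ ε F) := by
  simp only [homOp, X0D, uMon_pow, ← monomial_zero_eq_C_apply, monomial_mul_monomial, zero_add,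
    mul_one, add_mul, mul_add, one_mul, mul_assoc, map_add, coeff_monomial_mul, coeff_W0D,
    coeff_X_mul_pd, weight, tsub_zero, zero_le, if_true]
  split_ifs <;> ring

lemma yepsD_zero : YepsD lam₁ lam₂ ε 0 = 0 := by
  simp [YepsD, pd_zero]

lemma coeff_yepsD_congr {f f' : R2} {d : Fin 2 →₀ ℕ}
    (h : ∀ e : Fin 2 →₀ ℕ, e 0 = d 0 → coeff e f = coeff e f') :
    coeff d (YepsD lam₁ lam₂ ε f) = coeff d (YepsD lam₁ lam₂ ε f') := by
  unfold YepsD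
  split_ifs
  · rw [coeff_C_mul, coeff_C_mul, coeff_pd, coeff_pd, h _ (by simp)]
  · simp only [X_pow_eq]
    simp only [X_def, ← monomial_zero_eq_C_apply, monomial_mul_monomial, map_add,
      coeff_monomial_mul, coeff_pd]
    congr 1 <;> split_ifs with hm
    · have hd0 : 1 ≤ d 0 := by simpa using (Finsupp.le_def.mp hm) 0
      rw [h _ (by simp; omega)]
    · rfl
    · rw [h _ (by simp)]
    · rfl

lemma le_apply_zero_of_coeff_ne_zero {n : ℕ} (hR : ∃ S, R = uMon p q ^ n * S)
    {d : Fin 2 →₀ ℕ} (hd : coeff d R ≠ 0) : n * q ≤ d 0 := by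
  obtain ⟨S, rfl⟩ := hR
  rw [uMon_pow, coeff_monomial_mul] at hd
  split_ifs at hd with h
  · simpa using (Finsupp.le_def.mp h) 0
  · exact absurd rfl hd

lemma coeff_mul_yepsD_congr {n : ℕ} (hR : ∃ S, R = uMon p q ^ n * S) {f f' : R2}
    {d : Fin 2 →₀ ℕ} (h : ∀ e : Fin 2 →₀ ℕ, e 0 + n * q ≤ d 0 → coeff e f = coeff e f') :
    coeff d (R * YepsD lam₁ lam₂ ε f) = coeff d (R * YepsD lam₁ lam₂ ε f') := by
  rw [coeff_mul, coeff_mul]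
  refine Finset.sum_congr rfl fun x hx => ?_
  by_cases hx1 : coeff x.1 R = 0
  · rw [hx1, zero_mul, zero_mul]
  · have hn := le_apply_zero_of_coeff_ne_zero hR hx1
    have hd : x.1 0 + x.2 0 = d 0 := by
      rw [← Finsupp.add_apply, Finset.HasAntidiagonal.mem_antidiagonal.mp hx]
    rw [coeff_yepsD_congr fun e he => h e (by omega)]

lemma coeff_mul_yepsD_eq_zero {n : ℕ} (hR : ∃ S, R = uMon p q ^ n * S) (f : R2)
    {d : Fin 2 →₀ ℕ} (hd : d 0 < n * q) : coeff d (R * YepsD lam₁ lam₂ ε f) = 0 := by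
  simpa [yepsD_zero] using coeff_mul_yepsD_congr (f' := 0) hR (d := d) fun e he => by omega

lemma weight_add_uExp (hrel : (q : ℂ) * lam₁ = -(p : ℂ) * lam₂) (d : Fin 2 →₀ ℕ) (n : ℕ) :
    weight lam₁ lam₂ ε (d + uExp p q n) = weight lam₁ lam₂ ε d := by
  simp only [weight, Finsupp.add_apply, uExp_apply_zero, uExp_apply_one]
  push_cast
  linear_combination (n : ℂ) * hrel

lemma weight_eq_zero_iff (hq : 0 < q) (hco : Nat.Coprime p q) (hlam₂ : lam₂ ≠ 0)
    (hrel : (q : ℂ) * lam₁ = -(p : ℂ) * lam₂) (d : Fin 2 →₀ ℕ) :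
    weight lam₁ lam₂ ε d = 0 ↔ ∃ l : ℕ, (d 0 : ℤ) = l * q ∧ (d 1 : ℤ) + ε = l * p := by
  have key : (q : ℂ) * weight lam₁ lam₂ ε d = lam₂ * ((q * (d 1 + ε) - p * d 0 : ℤ) : ℂ) := by
    simp only [weight]
    push_cast
    linear_combination (d 0 : ℂ) * hrel
  rw [← hco.exists_of_mul_eq_mul hq,
    ← mul_right_inj' (Nat.cast_ne_zero.mpr hq.ne' : (q : ℂ) ≠ 0), mul_zero, key, mul_eq_zero,
    or_iff_right hlam₂, Int.cast_eq_zero, sub_eq_zero]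

lemma eq_single_of_weight_eq_zero (hlam₂ : lam₂ ≠ 0) {d : Fin 2 →₀ ℕ}
    (hw : weight lam₁ lam₂ ε d = 0) (h0 : d 0 = 0) : d = Finsupp.single 1 (-ε).toNat := by
  have h1 : ((d 1 + ε : ℤ) : ℂ) = 0 := by
    refine (mul_eq_zero.mp ?_).resolve_left hlam₂
    rw [← hw, weight, h0]
    push_cast
    ring
  have h1 : (d 1 : ℤ) + ε = 0 := by exact_mod_cast h1
  ext i
  fin_cases i
  · simp [h0]
  · simp; omega

lemma weight_single_toNat_neg (hε : ε ≤ 0) :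
    weight lam₁ lam₂ ε (Finsupp.single 1 (-ε).toNat) = 0 := by
  have h : (((-ε).toNat : ℕ) : ℂ) = -ε := by
    exact_mod_cast Int.toNat_of_nonneg (neg_nonneg.mpr hε)
  simp [weight, h]
  ring

lemma coeff_homOp_eq_zero_of_weight_eq_zero (hq : 0 < q) (hco : Nat.Coprime p q)
    (hlam₂ : lam₂ ≠ 0) (hrel : (q : ℂ) * lam₁ = -(p : ℂ) * lam₂)
    (hR : ∃ S, R = uMon p q ^ (k + 1) * S) (F : R2) {d : Fin 2 →₀ ℕ}
    (hw : weight lam₁ lam₂ ε d = 0) (hd : d 0 < (k + 1) * q) :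
    coeff d (homOp p q k lam₁ lam₂ μ ε R F) = 0 := by
  rw [coeff_homOp, hw, zero_mul, zero_add, coeff_mul_yepsD_eq_zero hR F hd, add_zero]
  split_ifs with hle
  -- `d - uExp p q k` is resonant of `x`-degree `< q`, hence is `y^{-ε}`, where the factor vanishes
  · have hw' : weight lam₁ lam₂ ε (d - uExp p q k) = 0 := by
      rwa [← weight_add_uExp hrel _ k, tsub_add_cancel_of_le hle]
    obtain ⟨l, hl, -⟩ := (weight_eq_zero_iff hq hco hlam₂ hrel _).mp hw'
    replace hl : (d - uExp p q k) 0 = l * q := by exact_mod_cast hl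
    have hlt : l * q < 1 * q := by
      rw [← hl, Finsupp.tsub_apply, uExp_apply_zero]
      rw [add_mul] at hd
      omega
    rw [hl, Nat.lt_one_iff.mp (Nat.lt_of_mul_lt_mul_right hlt), hw']
    simp
  · rfl

lemma coeff_homOp_add_uExp (hrel : (q : ℂ) * lam₁ = -(p : ℂ) * lam₂) (F : R2)
    {d : Fin 2 →₀ ℕ} (hw : weight lam₁ lam₂ ε d = 0) :
    coeff (d + uExp p q k) (homOp p q k lam₁ lam₂ μ ε R F) =
      d 0 * coeff d F + coeff (d + uExp p q k) (R * YepsD lam₁ lam₂ ε F) := by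
  rw [coeff_homOp, weight_add_uExp hrel, hw, if_pos le_add_self, add_tsub_cancel_right, hw]
  ring

lemma coeff_homOp_sub_congr (hk : 1 ≤ k) (hq : 0 < q) (hR : ∃ S, R = uMon p q ^ (k + 1) * S)
    {F F' : R2} {d : Fin 2 →₀ ℕ} (h : ∀ e : Fin 2 →₀ ℕ, e 0 < d 0 → coeff e F = coeff e F') :
    coeff d (homOp p q k lam₁ lam₂ μ ε R F) - weight lam₁ lam₂ ε d * coeff d F =
      coeff d (homOp p q k lam₁ lam₂ μ ε R F') - weight lam₁ lam₂ ε d * coeff d F' := by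
  have hkq : 1 ≤ k * q := Nat.one_le_iff_ne_zero.mpr (by positivity)
  simp only [coeff_homOp, add_assoc, add_sub_cancel_left]
  congr 1
  · split_ifs with hle
    · have := (Finsupp.le_def.mp hle) 0
      rw [h _ (by simp [Finsupp.tsub_apply] at this ⊢; omega)]
    · rfl
  · exact coeff_mul_yepsD_congr hR fun e he => h e (by nlinarith)

lemma uExp_le_of_weight_eq_zero (hq : 0 < q) (hco : Nat.Coprime p q) (hlam₂ : lam₂ ≠ 0)
    (hrel : (q : ℂ) * lam₁ = -(p : ℂ) * lam₂) (hε : ε ≤ 1) {d : Fin 2 →₀ ℕ}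
    (hw : weight lam₁ lam₂ ε d = 0) (hd : (k + 1) * q ≤ d 0) : uExp p q k ≤ d := by
  obtain ⟨l, h0, h1⟩ := (weight_eq_zero_iff hq hco hlam₂ hrel d).mp hw
  replace h0 : d 0 = l * q := by exact_mod_cast h0
  have hl : k + 1 ≤ l := Nat.le_of_mul_le_mul_right (h0 ▸ hd) hq
  have hlp : (k + 1) * p ≤ l * p := Nat.mul_le_mul_right p hl
  have h1' : (d 1 : ℤ) + ε = (l * p : ℕ) := by rw [h1]; push_cast; ring
  rw [Finsupp.le_def, Fin.forall_fin_two, uExp_apply_zero, uExp_apply_one]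
  refine ⟨by nlinarith, ?_⟩
  rcases Nat.eq_zero_or_pos p with rfl | hp
  · simp
  · rw [add_mul] at hlp
    omega

/-- For `G` without obstructions, the fixed points of `solveStep … G c` are the solutions of
`homOp … F = G` with coefficient `c` at `y^{-ε}`: at a nonresonant `d` it solves the equation at
`d` for the coefficient of `d`, at a resonant `d ≠ y^{-ε}` the equation at `d + uExp p q k`, in
which the coefficient of `d` enters with the factor `d 0`. -/
def solveStep (p q k : ℕ) (lam₁ lam₂ μ : ℂ) (ε : ℤ) (R G : R2) (c : ℂ) (F : R2) : R2 :=
  fun d =>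
    if weight lam₁ lam₂ ε d = 0 then
      if d 0 = 0 then c
      else coeff d F + coeff (d + uExp p q k) (G - homOp p q k lam₁ lam₂ μ ε R F) / d 0
    else coeff d F + coeff d (G - homOp p q k lam₁ lam₂ μ ε R F) / weight lam₁ lam₂ ε d

lemma coeff_solveStep (G : R2) (c : ℂ) (F : R2) (d : Fin 2 →₀ ℕ) :
    coeff d (solveStep p q k lam₁ lam₂ μ ε R G c F) =
      if weight lam₁ lam₂ ε d = 0 then
        if d 0 = 0 then c
        else coeff d F + coeff (d + uExp p q k) (G - homOp p q k lam₁ lam₂ μ ε R F) / d 0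
      else coeff d F + coeff d (G - homOp p q k lam₁ lam₂ μ ε R F) / weight lam₁ lam₂ ε d :=
  rfl

lemma coeff_solveStep_congr (hk : 1 ≤ k) (hq : 0 < q) (hrel : (q : ℂ) * lam₁ = -(p : ℂ) * lam₂)
    (hR : ∃ S, R = uMon p q ^ (k + 1) * S) (G : R2) (c : ℂ) {F F' : R2} {d : Fin 2 →₀ ℕ}
    (h : ∀ e : Fin 2 →₀ ℕ, e 0 < d 0 → coeff e F = coeff e F') :
    coeff d (solveStep p q k lam₁ lam₂ μ ε R G c F) =
      coeff d (solveStep p q k lam₁ lam₂ μ ε R G c F') := by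
  rw [coeff_solveStep, coeff_solveStep]
  split_ifs with hw h0
  · rfl
  · have hR' : coeff (d + uExp p q k) (R * YepsD lam₁ lam₂ ε F) =
        coeff (d + uExp p q k) (R * YepsD lam₁ lam₂ ε F') :=
      coeff_mul_yepsD_congr hR fun e he => h e (by simp at he; nlinarith)
    have hd : (d 0 : ℂ) ≠ 0 := Nat.cast_ne_zero.mpr h0
    rw [map_sub, map_sub, coeff_homOp_add_uExp hrel F hw, coeff_homOp_add_uExp hrel F' hw, hR']
    field_simp
    ring
  · have solve_diag (X : R2) :
        coeff d X + (coeff d G - coeff d (homOp p q k lam₁ lam₂ μ ε R X)) / weight lam₁ lam₂ ε d =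
          (coeff d G - (coeff d (homOp p q k lam₁ lam₂ μ ε R X) -
            weight lam₁ lam₂ ε d * coeff d X)) / weight lam₁ lam₂ ε d := by
      field_simp
      ring
    rw [map_sub, map_sub, solve_diag, solve_diag, coeff_homOp_sub_congr hk hq hR h]

lemma existsUnique_solveStep_eq_self (hk : 1 ≤ k) (hq : 0 < q)
    (hrel : (q : ℂ) * lam₁ = -(p : ℂ) * lam₂) (hR : ∃ S, R = uMon p q ^ (k + 1) * S)
    (G : R2) (c : ℂ) : ∃! F, solveStep p q k lam₁ lam₂ μ ε R G c F = F :=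
  existsUnique_fixedPoint_of_dependsOn_lt (fun d => d 0) _ fun _ _ _ h =>
    coeff_solveStep_congr hk hq hrel hR G c h

lemma homOp_eq_of_solveStep_eq_self (hq : 0 < q) (hco : Nat.Coprime p q) (hlam₂ : lam₂ ≠ 0)
    (hrel : (q : ℂ) * lam₁ = -(p : ℂ) * lam₂) (hε : ε ≤ 1)
    (hR : ∃ S, R = uMon p q ^ (k + 1) * S) {G : R2}
    (hG : ∀ d, weight lam₁ lam₂ ε d = 0 → d 0 < (k + 1) * q → coeff d G = 0) {c : ℂ} {F : R2}
    (hF : solveStep p q k lam₁ lam₂ μ ε R G c F = F) : homOp p q k lam₁ lam₂ μ ε R F = G := by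
  ext d
  by_cases hw : weight lam₁ lam₂ ε d = 0
  · by_cases hd : d 0 < (k + 1) * q
    · rw [coeff_homOp_eq_zero_of_weight_eq_zero hq hco hlam₂ hrel hR F hw hd, hG d hw hd]
    · obtain ⟨d, rfl⟩ : ∃ d', d = d' + uExp p q k :=
        ⟨_, (tsub_add_cancel_of_le (uExp_le_of_weight_eq_zero hq hco hlam₂ hrel hε hw
          (not_lt.mp hd))).symm⟩
      rw [weight_add_uExp hrel] at hw
      have h0 : d 0 ≠ 0 := by simp [add_mul] at hd; omega
      have := congrArg (coeff d) hF
      rw [coeff_solveStep, if_pos hw, if_neg h0, add_eq_left, div_eq_zero_iff,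
        or_iff_left (Nat.cast_ne_zero.mpr h0), map_sub, sub_eq_zero] at this
      exact this.symm
  · have := congrArg (coeff d) hF
    rw [coeff_solveStep, if_neg hw, add_eq_left, div_eq_zero_iff, or_iff_left hw, map_sub,
      sub_eq_zero] at this
    exact this.symm

lemma solveStep_eq_self (hlam₂ : lam₂ ≠ 0) {G F : R2} (hF : homOp p q k lam₁ lam₂ μ ε R F = G)
    {c : ℂ} (hc : coeff (Finsupp.single 1 (-ε).toNat) F = c) :
    solveStep p q k lam₁ lam₂ μ ε R G c F = F := by
  ext d
  rw [coeff_solveStep]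
  split_ifs with hw h0
  · rw [eq_single_of_weight_eq_zero hlam₂ hw h0, hc]
  all_goals rw [hF, sub_self, map_zero, zero_div, add_zero]

lemma coeff_single_of_solveStep_eq_self (hε : ε ≤ 0) {G : R2} {c : ℂ} {F : R2}
    (hF : solveStep p q k lam₁ lam₂ μ ε R G c F = F) :
    coeff (Finsupp.single 1 (-ε).toNat) F = c := by
  rw [← hF, coeff_solveStep, if_pos (weight_single_toNat_neg hε), if_pos (by simp)]

lemma forall_coeff_eq_zero_iff (hq : 0 < q) (hco : Nat.Coprime p q) (hlam₂ : lam₂ ≠ 0)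
    (hrel : (q : ℂ) * lam₁ = -(p : ℂ) * lam₂) (G : R2) :
    (∀ a b : ℕ, (∃ l : ℕ, l ≤ k ∧ (a : ℤ) = l * q ∧ (b : ℤ) + ε = l * p) →
        coeff (Finsupp.single 0 a + Finsupp.single 1 b) G = 0) ↔
      ∀ d, weight lam₁ lam₂ ε d = 0 → d 0 < (k + 1) * q → coeff d G = 0 := by
  have resonant_iff (d : Fin 2 →₀ ℕ) :
      (∃ l : ℕ, l ≤ k ∧ (d 0 : ℤ) = l * q ∧ (d 1 : ℤ) + ε = l * p) ↔
        weight lam₁ lam₂ ε d = 0 ∧ d 0 < (k + 1) * q := by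
    rw [weight_eq_zero_iff hq hco hlam₂ hrel]
    constructor
    · rintro ⟨l, hl, h0, h1⟩
      refine ⟨⟨l, h0, h1⟩, ?_⟩
      have : d 0 = l * q := by exact_mod_cast h0
      rw [this]
      exact Nat.mul_lt_mul_of_pos_right (Nat.lt_succ_of_le hl) hq
    · rintro ⟨⟨l, h0, h1⟩, hd⟩
      have : d 0 = l * q := by exact_mod_cast h0
      exact ⟨l, Nat.le_of_lt_succ (Nat.lt_of_mul_lt_mul_right (this ▸ hd)), h0, h1⟩
  constructor
  · intro h d hw hd
    have hd' : Finsupp.single 0 (d 0) + Finsupp.single 1 (d 1) = d := by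
      ext i
      fin_cases i <;> simp
    simpa only [hd'] using h (d 0) (d 1) ((resonant_iff d).mpr ⟨hw, hd⟩)
  · intro h a b hab
    obtain ⟨hw, hd⟩ := (resonant_iff (Finsupp.single 0 a + Finsupp.single 1 b)).mp
      (by simpa using hab)
    exact h _ hw hd

lemma exists_homOp_eq_iff (hk : 1 ≤ k) (hq : 0 < q) (hco : Nat.Coprime p q) (hlam₂ : lam₂ ≠ 0)
    (hrel : (q : ℂ) * lam₁ = -(p : ℂ) * lam₂) (hε : ε ≤ 1)
    (hR : ∃ S, R = uMon p q ^ (k + 1) * S) (G : R2) :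
    (∃ F, homOp p q k lam₁ lam₂ μ ε R F = G) ↔
      ∀ d, weight lam₁ lam₂ ε d = 0 → d 0 < (k + 1) * q → coeff d G = 0 := by
  constructor
  · rintro ⟨F, rfl⟩ d hw hd
    exact coeff_homOp_eq_zero_of_weight_eq_zero hq hco hlam₂ hrel hR F hw hd
  · intro hG
    obtain ⟨F, hF, -⟩ := existsUnique_solveStep_eq_self (μ := μ) hk hq hrel hR G 0
    exact ⟨F, homOp_eq_of_solveStep_eq_self hq hco hlam₂ hrel hε hR hG hF⟩

lemma existsUnique_homOp_eq (hk : 1 ≤ k) (hq : 0 < q) (hco : Nat.Coprime p q)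
    (hlam₂ : lam₂ ≠ 0) (hrel : (q : ℂ) * lam₁ = -(p : ℂ) * lam₂) (hε : ε ≤ 0)
    (hR : ∃ S, R = uMon p q ^ (k + 1) * S) {G : R2}
    (hG : ∀ d, weight lam₁ lam₂ ε d = 0 → d 0 < (k + 1) * q → coeff d G = 0) (c : ℂ) :
    ∃! F, homOp p q k lam₁ lam₂ μ ε R F = G ∧ coeff (Finsupp.single 1 (-ε).toNat) F = c := by
  obtain ⟨F, hF, huniq⟩ := existsUnique_solveStep_eq_self (μ := μ) hk hq hrel hR G c
  refine ⟨F, ⟨homOp_eq_of_solveStep_eq_self hq hco hlam₂ hrel (by omega) hR hG hF,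
    coeff_single_of_solveStep_eq_self hε hF⟩, fun F' ⟨hF', hc⟩ => ?_⟩
  exact huniq F' (solveStep_eq_self hlam₂ hF' hc)

end ResonantNormalForm

theorem stmt19_general (p q k : ℕ) (hk : 1 ≤ k)
    (hpq : (0 < p ∧ 0 < q ∧ Nat.Coprime p q) ∨ (p = 0 ∧ q = 1))
    (lam₁ lam₂ μ : ℂ) (hlam₂ : lam₂ ≠ 0)
    -- λ₁/λ₂ = −p/q :
    (hrel : (q : ℂ) * lam₁ = -(p : ℂ) * lam₂)
    (ε : ℤ) (hε : ε = -1 ∨ ε = 0 ∨ ε = 1)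
    (R : R2)
    -- R is divisible by u^{k+1} :
    (hR : ∃ S : R2, R = uMon p q ^ (k + 1) * S)
    (G : R2) :
    -- solvability of  X·F + ελ₂(1+μu^k)F = G :
    ((∃ F : R2,
        X0D lam₁ lam₂ μ p q k F + R * YepsD lam₁ lam₂ ε F +
          MvPowerSeries.C (σ := Fin 2) (R := ℂ) ((ε : ℂ) * lam₂) *
            ((1 + MvPowerSeries.C (σ := Fin 2) (R := ℂ) μ * uMon p q ^ k) * F) = G) ↔
      -- iff G contains no monomial y^{−ε}uⁿ, 0 ≤ n ≤ k :
      (∀ a b : ℕ, (∃ l : ℕ, l ≤ k ∧ (a : ℤ) = l * q ∧ (b : ℤ) + ε = l * p) →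
        MvPowerSeries.coeff (R := ℂ) (Finsupp.single 0 a + Finsupp.single 1 b) G = 0)) ∧
    -- if ε ≤ 0, the coefficient of y^{−ε} in F is free and F is unique up to it :
    (ε ≤ 0 →
      (∃ F : R2,
        X0D lam₁ lam₂ μ p q k F + R * YepsD lam₁ lam₂ ε F +
          MvPowerSeries.C (σ := Fin 2) (R := ℂ) ((ε : ℂ) * lam₂) *
            ((1 + MvPowerSeries.C (σ := Fin 2) (R := ℂ) μ * uMon p q ^ k) * F) = G) →
      ∀ c : ℂ, ∃! F : R2,
        (X0D lam₁ lam₂ μ p q k F + R * YepsD lam₁ lam₂ ε F +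
          MvPowerSeries.C (σ := Fin 2) (R := ℂ) ((ε : ℂ) * lam₂) *
            ((1 + MvPowerSeries.C (σ := Fin 2) (R := ℂ) μ * uMon p q ^ k) * F) = G) ∧
        MvPowerSeries.coeff (R := ℂ) (Finsupp.single 1 (-ε).toNat) F = c) := by
  obtain ⟨hq, hco⟩ : 0 < q ∧ Nat.Coprime p q := by
    rcases hpq with ⟨-, hq, hco⟩ | ⟨rfl, rfl⟩
    · exact ⟨hq, hco⟩
    · exact ⟨one_pos, Nat.coprime_zero_left 1 |>.mpr rfl⟩
  have solvable_iff :=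
    ResonantNormalForm.exists_homOp_eq_iff (μ := μ) (ε := ε) hk hq hco hlam₂ hrel (by omega) hR G
  refine ⟨solvable_iff.trans
    (ResonantNormalForm.forall_coeff_eq_zero_iff hq hco hlam₂ hrel G).symm, fun hε0 hsol c => ?_⟩
  exact ResonantNormalForm.existsUnique_homOp_eq hk hq hco hlam₂ hrel hε0 hR
    (solvable_iff.mp hsol) c

theorem stmt19 (p q k : ℕ) (hk : 1 ≤ k)
    (hpq : (0 < p ∧ 0 < q ∧ Nat.Coprime p q) ∨ (p = 0 ∧ q = 1))
    (lam₁ lam₂ μ : ℂ) (hlam₂ : lam₂ ≠ 0)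
    -- λ₁/λ₂ = −p/q :
    (hrel : (q : ℂ) * lam₁ = -(p : ℂ) * lam₂)
    (ε : ℤ) (hε : ε = -1 ∨ ε = 0 ∨ ε = 1)
    (hε' : ε = -1 → p = 0 ∧ lam₁ = 0)
    (R : R2)
    -- R is divisible by u^{k+1} :
    (hR : ∃ S : R2, R = uMon p q ^ (k + 1) * S)
    (G : R2) :
    -- solvability of  X·F + ελ₂(1+μu^k)F = G :
    ((∃ F : R2,
        X0D lam₁ lam₂ μ p q k F + R * YepsD lam₁ lam₂ ε F +
          MvPowerSeries.C (σ := Fin 2) (R := ℂ) ((ε : ℂ) * lam₂) *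
            ((1 + MvPowerSeries.C (σ := Fin 2) (R := ℂ) μ * uMon p q ^ k) * F) = G) ↔
      -- iff G contains no monomial y^{−ε}uⁿ, 0 ≤ n ≤ k :
      (∀ a b : ℕ, (∃ l : ℕ, l ≤ k ∧ (a : ℤ) = l * q ∧ (b : ℤ) + ε = l * p) →
        MvPowerSeries.coeff (R := ℂ) (Finsupp.single 0 a + Finsupp.single 1 b) G = 0)) ∧
    -- if ε ≤ 0, the coefficient of y^{−ε} in F is free and F is unique up to it :
    (ε ≤ 0 →
      (∃ F : R2,
        X0D lam₁ lam₂ μ p q k F + R * YepsD lam₁ lam₂ ε F +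
          MvPowerSeries.C (σ := Fin 2) (R := ℂ) ((ε : ℂ) * lam₂) *
            ((1 + MvPowerSeries.C (σ := Fin 2) (R := ℂ) μ * uMon p q ^ k) * F) = G) →
      ∀ c : ℂ, ∃! F : R2,
        (X0D lam₁ lam₂ μ p q k F + R * YepsD lam₁ lam₂ ε F +
          MvPowerSeries.C (σ := Fin 2) (R := ℂ) ((ε : ℂ) * lam₂) *
            ((1 + MvPowerSeries.C (σ := Fin 2) (R := ℂ) μ * uMon p q ^ k) * F) = G) ∧
        MvPowerSeries.coeff (R := ℂ) (Finsupp.single 1 (-ε).toNat) F = c) :=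
  stmt19_general p q k hk hpq lam₁ lam₂ μ hlam₂ hrel ε hε R hR G
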